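/- Let ζ and ζ̃ be probability measures on (ℝ^d × {−1,1}^d)² with finite second moments, and let 𝒥 be the interpolation operator (𝒥f)(x,v,x',v') = (‖x'−x‖₂/√d) ∫_0^1 f(x + t(x'−x), v) dt. Then for every bounded Lipschitz f, |ζ(𝒥f) − ζ̃(𝒥f)| ≤ d_W(ζ, ζ̃) · ( (1/√d) |f|_Lip · E_ζ[‖x' − x‖₂²]^{1/2} + (1/√d) ‖f‖_∞ ), where d_W is the 2-Wasserstein distance and E_ζ[‖x'−x‖₂²] is the expected square jump distance under ζ. -/

import Mathlib

open MeasureTheory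

/-- The interpolation operator on `u = ((x, v), (x', v'))`:
`(𝒥 f)(u) = (‖x' − x‖₂/√d) ∫_0^1 f(x + t(x' − x), v) dt`. -/
noncomputable def Jop {d : ℕ}
    (f : EuclideanSpace ℝ (Fin d) → EuclideanSpace ℝ (Fin d) → ℝ)
    (u : (EuclideanSpace ℝ (Fin d) × EuclideanSpace ℝ (Fin d)) ×
         (EuclideanSpace ℝ (Fin d) × EuclideanSpace ℝ (Fin d))) : ℝ :=
  (‖u.2.1 - u.1.1‖ / Real.sqrt d) * ∫ t in (0:ℝ)..1, f (u.1.1 + t • (u.2.1 - u.1.1)) u.1.2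

/-- The 2-Wasserstein distance on `(ℝ^d × {−1,1}^d)²` for the ground norm
`‖u₁ − u₂‖ = ‖x₁−x₂‖₂ + ‖v₁−v₂‖₂ + ‖x₁'−x₂'‖₂ + ‖v₁'−v₂'‖₂`. -/
noncomputable def W2S {d : ℕ}
    (μ ν : Measure ((EuclideanSpace ℝ (Fin d) × EuclideanSpace ℝ (Fin d)) ×
      (EuclideanSpace ℝ (Fin d) × EuclideanSpace ℝ (Fin d)))) : ℝ :=
  Real.sqrt (sInf {r : ℝ | ∃ ξ, ξ.map Prod.fst = μ ∧ ξ.map Prod.snd = ν ∧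
    r = ∫ p, (‖p.1.1.1 - p.2.1.1‖ + ‖p.1.1.2 - p.2.1.2‖ +
              ‖p.1.2.1 - p.2.2.1‖ + ‖p.1.2.2 - p.2.2.2‖) ^ 2 ∂ξ})

/-! The operator `𝒥f` is Lipschitz up to a weight that is linear in the jump length:
`|𝒥f(u₁) − 𝒥f(u₂)| ≤ d^{-1/2} (Lf ‖x₁' − x₁‖ + Bf) ‖u₁ − u₂‖`, since the segment average of `f`
moves by at most `Lf` times the displacement of the endpoints while the prefactor `‖x' − x‖`
moves by at most that displacement. Integrating this against a coupling `ξ` of `ζ` and `ζ̃` and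
applying Cauchy–Schwarz to each of the two terms of the weight bounds the left-hand side by
`(∫ ‖u₁ − u₂‖² dξ)^{1/2}` times the bracket; the infimum over couplings is `d_W(ζ, ζ̃)`. -/

lemma abs_mul_sub_mul_le (a₁ a₂ b₁ b₂ : ℝ) :
    |a₁ * b₁ - a₂ * b₂| ≤ |a₁| * |b₁ - b₂| + |a₁ - a₂| * |b₂| := by
  rw [← abs_mul, ← abs_mul, show a₁ * b₁ - a₂ * b₂ = a₁ * (b₁ - b₂) + (a₁ - a₂) * b₂ by ring]
  exact abs_add_le _ _

section Segment

lemma lipschitz_const_nonneg {E F : Type*} [NormedAddCommGroup E] [Nontrivial E]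
    [SeminormedAddCommGroup F] {f : E → F → ℝ} {Lf : ℝ}
    (hLip : ∀ x v y w, |f x v - f y w| ≤ Lf * (‖x - y‖ + ‖v - w‖)) : 0 ≤ Lf := by
  obtain ⟨x, hx⟩ := exists_ne (0 : E)
  have h := hLip x 0 0 0
  simp only [sub_zero, sub_self, norm_zero, add_zero] at h
  exact nonneg_of_mul_nonneg_left ((abs_nonneg _).trans h) (norm_pos_iff.2 hx)

variable {E F : Type*} [NormedAddCommGroup E] [NormedSpace ℝ E] {f : E → F → ℝ} {Lf Bf : ℝ}

lemma abs_integral_segment_le (hBdd : ∀ x v, |f x v| ≤ Bf) (x e : E) (v : F) :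
    |∫ t in (0 : ℝ)..1, f (x + t • e) v| ≤ Bf := by
  simpa using intervalIntegral.norm_integral_le_of_norm_le_const (a := 0) (b := 1)
    (f := fun t => f (x + t • e) v) fun t _ => hBdd (x + t • e) v

variable [SeminormedAddCommGroup F]

lemma continuous_segment (hLip : ∀ x v y w, |f x v - f y w| ≤ Lf * (‖x - y‖ + ‖v - w‖))
    (x e : E) (v : F) : Continuous fun t : ℝ => f (x + t • e) v := by
  have hf : LipschitzWith (Real.toNNReal Lf) (f · v) :=
    LipschitzWith.of_dist_le' fun x y => by simpa [Real.dist_eq, dist_eq_norm] using hLip x v y v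
  exact hf.continuous.comp (by fun_prop)

lemma norm_segment_sub_segment_le (x₁ x₁' x₂ x₂' : E) {t : ℝ} (ht₀ : 0 ≤ t) (ht₁ : t ≤ 1) :
    ‖x₁ + t • (x₁' - x₁) - (x₂ + t • (x₂' - x₂))‖ ≤ ‖x₁ - x₂‖ + ‖x₁' - x₂'‖ := by
  have h : x₁ + t • (x₁' - x₁) - (x₂ + t • (x₂' - x₂)) =
      (1 - t) • (x₁ - x₂) + t • (x₁' - x₂') := by
    module
  rw [h]
  refine (norm_add_le _ _).trans ?_
  rw [norm_smul, norm_smul, Real.norm_of_nonneg (sub_nonneg.2 ht₁), Real.norm_of_nonneg ht₀]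
  nlinarith [norm_nonneg (x₁ - x₂), norm_nonneg (x₁' - x₂')]

lemma abs_integral_segment_sub_le (hLf : 0 ≤ Lf)
    (hLip : ∀ x v y w, |f x v - f y w| ≤ Lf * (‖x - y‖ + ‖v - w‖)) (x₁ x₁' x₂ x₂' : E)
    (v₁ v₂ : F) :
    |(∫ t in (0 : ℝ)..1, f (x₁ + t • (x₁' - x₁)) v₁) -
        ∫ t in (0 : ℝ)..1, f (x₂ + t • (x₂' - x₂)) v₂|
      ≤ Lf * (‖x₁ - x₂‖ + ‖x₁' - x₂'‖ + ‖v₁ - v₂‖) := by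
  rw [← intervalIntegral.integral_sub ((continuous_segment hLip _ _ _).intervalIntegrable _ _)
    ((continuous_segment hLip _ _ _).intervalIntegrable _ _)]
  have hpt : ∀ t ∈ Set.uIoc (0 : ℝ) 1,
      ‖f (x₁ + t • (x₁' - x₁)) v₁ - f (x₂ + t • (x₂' - x₂)) v₂‖
        ≤ Lf * (‖x₁ - x₂‖ + ‖x₁' - x₂'‖ + ‖v₁ - v₂‖) := by
    intro t ht
    rw [Set.uIoc_of_le zero_le_one] at ht
    have hx := norm_segment_sub_segment_le x₁ x₁' x₂ x₂' ht.1.le ht.2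
    calc _ ≤ Lf * (‖x₁ + t • (x₁' - x₁) - (x₂ + t • (x₂' - x₂))‖ + ‖v₁ - v₂‖) := hLip _ _ _ _
      _ ≤ _ := by gcongr
  simpa using intervalIntegral.norm_integral_le_of_norm_le_const hpt

end Segment

section Coupling

variable {α : Type*} [MeasurableSpace α]

lemma integral_mul_le_sqrt_mul_sqrt {μ : Measure α} {f g : α → ℝ} (hf₀ : 0 ≤ᵐ[μ] f)
    (hg₀ : 0 ≤ᵐ[μ] g) (hf : MemLp f 2 μ) (hg : MemLp g 2 μ) :
    ∫ a, f a * g a ∂μ ≤ √(∫ a, f a ^ 2 ∂μ) * √(∫ a, g a ^ 2 ∂μ) := by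
  simpa [Real.sqrt_eq_rpow] using integral_mul_le_Lp_mul_Lq_of_nonneg
    Real.HolderConjugate.two_two hf₀ hg₀ (by simpa using hf) (by simpa using hg)

lemma integral_le_sqrt_integral_sq {μ : Measure α} [IsProbabilityMeasure μ] {f : α → ℝ}
    (hf₀ : 0 ≤ᵐ[μ] f) (hf : MemLp f 2 μ) : ∫ a, f a ∂μ ≤ √(∫ a, f a ^ 2 ∂μ) := by
  simpa using integral_mul_le_sqrt_mul_sqrt hf₀ (ae_of_all _ fun _ => zero_le_one) hf
    (memLp_const 1)

lemma abs_integral_map_fst_sub_map_snd_le {ξ : Measure (α × α)} {g : α → ℝ}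
    (h₁ : Integrable g (ξ.map Prod.fst)) (h₂ : Integrable g (ξ.map Prod.snd)) :
    |∫ a, g a ∂(ξ.map Prod.fst) - ∫ a, g a ∂(ξ.map Prod.snd)| ≤ ∫ p, |g p.1 - g p.2| ∂ξ := by
  have i₁ : Integrable (fun p : α × α => g p.1) ξ := h₁.comp_measurable measurable_fst
  have i₂ : Integrable (fun p : α × α => g p.2) ξ := h₂.comp_measurable measurable_snd
  rw [integral_map measurable_fst.aemeasurable h₁.1, integral_map measurable_snd.aemeasurable h₂.1,
    ← integral_sub i₁ i₂]
  exact abs_integral_le_integral_abs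

lemma memLp_fst_sub_snd {E : Type*} [NormedAddCommGroup E] [MeasurableSpace E]
    {ξ : Measure (E × E)} {p : ENNReal} (h₁ : MemLp id p (ξ.map Prod.fst))
    (h₂ : MemLp id p (ξ.map Prod.snd)) : MemLp (fun q => q.1 - q.2) p ξ :=
  (h₁.comp_of_map measurable_fst.aemeasurable).sub (h₂.comp_of_map measurable_snd.aemeasurable)

end Coupling

section StateSpace

variable {E F : Type*} [NormedAddCommGroup E] [NormedAddCommGroup F]

def stateDist (u₁ u₂ : (E × F) × (E × F)) : ℝ :=
  ‖u₁.1.1 - u₂.1.1‖ + ‖u₁.1.2 - u₂.1.2‖ + ‖u₁.2.1 - u₂.2.1‖ + ‖u₁.2.2 - u₂.2.2‖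

lemma stateDist_nonneg (u₁ u₂ : (E × F) × (E × F)) : 0 ≤ stateDist u₁ u₂ := by
  unfold stateDist; positivity

lemma stateDist_le (u₁ u₂ : (E × F) × (E × F)) : stateDist u₁ u₂ ≤ 4 * ‖u₁ - u₂‖ := by
  have h₁ := (norm_fst_le (u₁ - u₂).1).trans (norm_fst_le (u₁ - u₂))
  have h₂ := (norm_snd_le (u₁ - u₂).1).trans (norm_fst_le (u₁ - u₂))
  have h₃ := (norm_fst_le (u₁ - u₂).2).trans (norm_snd_le (u₁ - u₂))
  have h₄ := (norm_snd_le (u₁ - u₂).2).trans (norm_snd_le (u₁ - u₂))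
  simp only [Prod.fst_sub, Prod.snd_sub] at h₁ h₂ h₃ h₄
  unfold stateDist
  linarith

variable [MeasurableSpace E] [BorelSpace E] [SecondCountableTopology E]
  [MeasurableSpace F] [BorelSpace F] [SecondCountableTopology F]

lemma memLp_id_two_of_integrable_sum_sq_norm {μ : Measure ((E × F) × (E × F))}
    (h : Integrable (fun u => ‖u.1.1‖ ^ 2 + ‖u.1.2‖ ^ 2 + ‖u.2.1‖ ^ 2 + ‖u.2.2‖ ^ 2) μ) :
    MemLp id 2 μ := by
  refine (memLp_two_iff_integrable_sq_norm aestronglyMeasurable_id).2 <|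
    h.mono' (by fun_prop) (ae_of_all _ fun u => ?_)
  have h₁ := sq_nonneg ‖u.1.1‖
  have h₂ := sq_nonneg ‖u.1.2‖
  have h₃ := sq_nonneg ‖u.2.1‖
  have h₄ := sq_nonneg ‖u.2.2‖
  have hu : ‖u‖ ≤ √(‖u.1.1‖ ^ 2 + ‖u.1.2‖ ^ 2 + ‖u.2.1‖ ^ 2 + ‖u.2.2‖ ^ 2) := by
    refine norm_prod_le_iff.2 ⟨norm_prod_le_iff.2 ⟨?_, ?_⟩, norm_prod_le_iff.2 ⟨?_, ?_⟩⟩ <;>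
      exact Real.le_sqrt_of_sq_le (by linarith)
  calc ‖‖id u‖ ^ 2‖ = ‖u‖ ^ 2 := by simp
    _ ≤ √(‖u.1.1‖ ^ 2 + ‖u.1.2‖ ^ 2 + ‖u.2.1‖ ^ 2 + ‖u.2.2‖ ^ 2) ^ 2 := by gcongr
    _ = _ := Real.sq_sqrt (by positivity)

lemma memLp_stateDist {ξ : Measure (((E × F) × (E × F)) × ((E × F) × (E × F)))}
    (h : MemLp (fun q => q.1 - q.2) 2 ξ) : MemLp (fun q => stateDist q.1 q.2) 2 ξ :=
  h.of_le_mul (c := 4) (by unfold stateDist; fun_prop) (ae_of_all _ fun q => by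
    rw [Real.norm_of_nonneg (stateDist_nonneg _ _)]; exact stateDist_le _ _)

end StateSpace

local notation "ExtState" d => (EuclideanSpace ℝ (Fin d) × EuclideanSpace ℝ (Fin d)) × (EuclideanSpace ℝ (Fin d) × EuclideanSpace ℝ (Fin d))

section Interpolation

variable {d : ℕ} {f : EuclideanSpace ℝ (Fin d) → EuclideanSpace ℝ (Fin d) → ℝ} {Lf Bf : ℝ}

lemma abs_Jop_le (hBdd : ∀ x v, |f x v| ≤ Bf) (u : ExtState d) :
    |Jop f u| ≤ ‖u.2.1 - u.1.1‖ / √d * Bf := by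
  rw [Jop, abs_mul, abs_div, abs_norm, abs_of_nonneg (Real.sqrt_nonneg _)]
  gcongr
  exact abs_integral_segment_le hBdd _ _ _

lemma abs_Jop_sub_le (hLf : 0 ≤ Lf)
    (hLip : ∀ x v y w, |f x v - f y w| ≤ Lf * (‖x - y‖ + ‖v - w‖)) (hBdd : ∀ x v, |f x v| ≤ Bf)
    (u₁ u₂ : ExtState d) :
    |Jop f u₁ - Jop f u₂| ≤ 1 / √d * (Lf * ‖u₁.2.1 - u₁.1.1‖ + Bf) * stateDist u₁ u₂ := by
  obtain ⟨⟨x₁, v₁⟩, x₁', v₁'⟩ := u₁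
  obtain ⟨⟨x₂, v₂⟩, x₂', v₂'⟩ := u₂
  have hI := abs_integral_segment_sub_le hLf hLip x₁ x₁' x₂ x₂' v₁ v₂
  have hB := abs_integral_segment_le hBdd x₂ (x₂' - x₂) v₂
  have hBf : 0 ≤ Bf := (abs_nonneg _).trans hB
  have hN : |‖x₁' - x₁‖ - ‖x₂' - x₂‖| ≤ ‖x₁ - x₂‖ + ‖x₁' - x₂'‖ :=
    (abs_norm_sub_norm_le _ _).trans <| by
      rw [show x₁' - x₁ - (x₂' - x₂) = (x₁' - x₂') - (x₁ - x₂) by abel, add_comm]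
      exact norm_sub_le _ _
  have hJ (u : ExtState d) : Jop f u = 1 / √d *
      (‖u.2.1 - u.1.1‖ * ∫ t in (0 : ℝ)..1, f (u.1.1 + t • (u.2.1 - u.1.1)) u.1.2) := by
    rw [Jop]; ring
  rw [hJ, hJ, ← mul_sub, abs_mul, abs_of_nonneg (by positivity : (0 : ℝ) ≤ 1 / √d), mul_assoc]
  gcongr
  calc _ ≤ _ := abs_mul_sub_mul_le _ _ _ _
    _ ≤ ‖x₁' - x₁‖ * (Lf * (‖x₁ - x₂‖ + ‖x₁' - x₂'‖ + ‖v₁ - v₂‖)) +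
          (‖x₁ - x₂‖ + ‖x₁' - x₂'‖) * Bf := by
        rw [abs_norm]; gcongr
    _ ≤ _ := by
        unfold stateDist
        nlinarith [mul_nonneg (mul_nonneg hLf (norm_nonneg (x₁' - x₁))) (norm_nonneg (v₁' - v₂')),
          mul_nonneg hBf (norm_nonneg (v₁ - v₂)), mul_nonneg hBf (norm_nonneg (v₁' - v₂'))]

lemma continuous_Jop (hLf : 0 ≤ Lf)
    (hLip : ∀ x v y w, |f x v - f y w| ≤ Lf * (‖x - y‖ + ‖v - w‖)) (hBdd : ∀ x v, |f x v| ≤ Bf) :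
    Continuous (Jop f) := by
  refine continuous_iff_continuousAt.2 fun u₀ => tendsto_iff_norm_sub_tendsto_zero.2 ?_
  refine squeeze_zero (fun _ => norm_nonneg _) (fun u => abs_Jop_sub_le hLf hLip hBdd u u₀) ?_
  have : Continuous fun u => 1 / √d * (Lf * ‖u.2.1 - u.1.1‖ + Bf) * stateDist u u₀ := by
    unfold stateDist; fun_prop
  simpa [stateDist] using this.tendsto u₀

lemma integrable_Jop (hLf : 0 ≤ Lf)
    (hLip : ∀ x v y w, |f x v - f y w| ≤ Lf * (‖x - y‖ + ‖v - w‖)) (hBdd : ∀ x v, |f x v| ≤ Bf)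
    {μ : Measure (ExtState d)} [IsFiniteMeasure μ] (hμ : MemLp id 2 μ) :
    Integrable (Jop f) μ := by
  have hN : Integrable (fun u => ‖u.2.1 - u.1.1‖) μ :=
    (hμ.snd.fst.sub hμ.fst.fst).norm.integrable one_le_two
  exact ((hN.div_const _).mul_const _).mono' (continuous_Jop hLf hLip hBdd).aestronglyMeasurable
    (ae_of_all _ (abs_Jop_le hBdd))

lemma abs_integral_Jop_sub_le_of_coupling (hLf : 0 ≤ Lf)
    (hLip : ∀ x v y w, |f x v - f y w| ≤ Lf * (‖x - y‖ + ‖v - w‖)) (hBdd : ∀ x v, |f x v| ≤ Bf)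
    {ξ : Measure ((ExtState d) × (ExtState d))} [IsProbabilityMeasure ξ]
    (h₁ : MemLp id 2 (ξ.map Prod.fst)) (h₂ : MemLp id 2 (ξ.map Prod.snd)) :
    |∫ u, Jop f u ∂(ξ.map Prod.fst) - ∫ u, Jop f u ∂(ξ.map Prod.snd)| ≤
      √(∫ p, stateDist p.1 p.2 ^ 2 ∂ξ) * (1 / √d * Lf *
        √(∫ u, ‖u.2.1 - u.1.1‖ ^ 2 ∂(ξ.map Prod.fst)) + 1 / √d * Bf) := by
  have hD : MemLp (fun p => stateDist p.1 p.2) 2 ξ := memLp_stateDist (memLp_fst_sub_snd h₁ h₂)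
  have hN : MemLp (fun u => ‖u.2.1 - u.1.1‖) 2 (ξ.map Prod.fst) :=
    (h₁.snd.fst.sub h₁.fst.fst).norm
  have hNξ : MemLp (fun p => ‖p.1.2.1 - p.1.1.1‖) 2 ξ :=
    hN.comp_of_map measurable_fst.aemeasurable
  have hND : Integrable (fun p => ‖p.1.2.1 - p.1.1.1‖ * stateDist p.1 p.2) ξ :=
    hNξ.integrable_mul hD
  have hD₀ : 0 ≤ᵐ[ξ] fun p => stateDist p.1 p.2 := ae_of_all _ fun p => stateDist_nonneg _ _
  have hN₀ : 0 ≤ᵐ[ξ] fun p => ‖p.1.2.1 - p.1.1.1‖ := ae_of_all _ fun p => norm_nonneg _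
  have hNsq : ∫ p, ‖p.1.2.1 - p.1.1.1‖ ^ 2 ∂ξ = ∫ u, ‖u.2.1 - u.1.1‖ ^ 2 ∂(ξ.map Prod.fst) :=
    (integral_map measurable_fst.aemeasurable (hN.aestronglyMeasurable.pow 2)).symm
  have hBf : 0 ≤ Bf := (abs_nonneg _).trans (hBdd 0 0)
  calc _ ≤ ∫ p, |Jop f p.1 - Jop f p.2| ∂ξ :=
        abs_integral_map_fst_sub_map_snd_le (integrable_Jop hLf hLip hBdd h₁)
          (integrable_Jop hLf hLip hBdd h₂)
    _ ≤ ∫ p, (1 / √d * Lf * (‖p.1.2.1 - p.1.1.1‖ * stateDist p.1 p.2) +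
          1 / √d * Bf * stateDist p.1 p.2) ∂ξ := by
        refine integral_mono_of_nonneg (ae_of_all _ fun _ => abs_nonneg _)
          ((hND.const_mul _).add ((hD.integrable one_le_two).const_mul _))
          (ae_of_all _ fun p => ?_)
        have := abs_Jop_sub_le hLf hLip hBdd p.1 p.2
        linarith
    _ = 1 / √d * Lf * ∫ p, ‖p.1.2.1 - p.1.1.1‖ * stateDist p.1 p.2 ∂ξ +
          1 / √d * Bf * ∫ p, stateDist p.1 p.2 ∂ξ := by
        rw [integral_add (hND.const_mul _) ((hD.integrable one_le_two).const_mul _),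
          integral_const_mul, integral_const_mul]
    _ ≤ 1 / √d * Lf * (√(∫ p, ‖p.1.2.1 - p.1.1.1‖ ^ 2 ∂ξ) *
          √(∫ p, stateDist p.1 p.2 ^ 2 ∂ξ)) + 1 / √d * Bf * √(∫ p, stateDist p.1 p.2 ^ 2 ∂ξ) := by
        gcongr
        · exact integral_mul_le_sqrt_mul_sqrt hN₀ hD₀ hNξ hD
        · exact integral_le_sqrt_integral_sq hD₀ hD
    _ = _ := by rw [hNsq]; ring

end Interpolation

lemma le_W2S_mul {d : ℕ} {ζ ζt : Measure (ExtState d)} [IsProbabilityMeasure ζ]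
    [IsProbabilityMeasure ζt] {c K : ℝ} (hK : 0 ≤ K)
    (h : ∀ ξ : Measure ((ExtState d) × (ExtState d)), ξ.map Prod.fst = ζ → ξ.map Prod.snd = ζt →
      c ≤ √(∫ p, stateDist p.1 p.2 ^ 2 ∂ξ) * K) :
    c ≤ W2S ζ ζt * K := by
  have hmono : Monotone fun r => √r * K := fun _ _ hrs =>
    mul_le_mul_of_nonneg_right (Real.sqrt_le_sqrt hrs) hK
  unfold W2S
  rw [hmono.map_csInf_of_continuousAt (by fun_prop) ?nonempty ?bddBelow]
  case nonempty => exact ⟨_, ζ.prod ζt, Measure.fst_prod, Measure.snd_prod, rfl⟩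
  case bddBelow =>
    exact ⟨0, by rintro _ ⟨ξ, -, -, rfl⟩; exact integral_nonneg fun _ => sq_nonneg _⟩
  refine le_csInf (Set.Nonempty.image _ ⟨_, ζ.prod ζt, Measure.fst_prod, Measure.snd_prod, rfl⟩) ?_
  rintro _ ⟨_, ⟨ξ, h₁, h₂, rfl⟩, rfl⟩
  exact h ξ h₁ h₂

/-- **Step 1 of the proof of Theorem 2: Wasserstein bound on interpolated averages.**
For probability measures `ζ, ζ̃` with finite second moments on the extended state space
and `f` bounded (by `Bf`) and Lipschitz (with constant `Lf`),
`|ζ(𝒥f) − ζ̃(𝒥f)| ≤ d_W(ζ, ζ̃) ((1/√d) Lf E_ζ[‖x'−x‖²]^{1/2} + (1/√d) Bf)`. -/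
theorem interpolated_average_wasserstein_bound {d : ℕ} (hd : 0 < d)
    (ζ ζt : Measure ((EuclideanSpace ℝ (Fin d) × EuclideanSpace ℝ (Fin d)) ×
      (EuclideanSpace ℝ (Fin d) × EuclideanSpace ℝ (Fin d))))
    [IsProbabilityMeasure ζ] [IsProbabilityMeasure ζt]
    (hζ2 : Integrable (fun u => ‖u.1.1‖ ^ 2 + ‖u.1.2‖ ^ 2 + ‖u.2.1‖ ^ 2 + ‖u.2.2‖ ^ 2) ζ)
    (hζt2 : Integrable (fun u => ‖u.1.1‖ ^ 2 + ‖u.1.2‖ ^ 2 + ‖u.2.1‖ ^ 2 + ‖u.2.2‖ ^ 2) ζt)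
    (f : EuclideanSpace ℝ (Fin d) → EuclideanSpace ℝ (Fin d) → ℝ)
    (Lf Bf : ℝ)
    (hLip : ∀ x v y w, |f x v - f y w| ≤ Lf * (‖x - y‖ + ‖v - w‖))
    (hBdd : ∀ x v, |f x v| ≤ Bf) :
    |(∫ u, Jop f u ∂ζ) - ∫ u, Jop f u ∂ζt| ≤
      W2S ζ ζt * ((1 / Real.sqrt d) * Lf * Real.sqrt (∫ u, ‖u.2.1 - u.1.1‖ ^ 2 ∂ζ) +
        (1 / Real.sqrt d) * Bf) := by
  have : Nonempty (Fin d) := ⟨⟨0, hd⟩⟩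
  have hLf : 0 ≤ Lf := lipschitz_const_nonneg hLip
  have hBf : 0 ≤ Bf := (abs_nonneg _).trans (hBdd 0 0)
  refine le_W2S_mul (by positivity) fun ξ h₁ h₂ => ?_
  subst h₁ h₂
  have : IsProbabilityMeasure ξ := Measure.isProbabilityMeasure_of_map Prod.fst
  exact abs_integral_Jop_sub_le_of_coupling hLf hLip hBdd
    (memLp_id_two_of_integrable_sum_sq_norm hζ2) (memLp_id_two_of_integrable_sum_sq_norm hζt2)
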